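/- arXiv:2201.06414 — 9 statements merged into one kernel-verified Lean document; each statement's English description precedes it below -/
import Mathlib

section
/- Let θ and A be real 2×2 matrices, ε ∈ ℝ and ξ ∈ ℝ². The linear map D : ℝ × ℝ² → ℝ × ℝ² defined by D(a,w) = (εa, aξ + Aw) is a derivation of the Lie algebra 𝔤(θ) (i.e. D[X,Y] = [DX,Y] + [X,DY] for all X,Y ∈ 𝔤(θ)) if and only if Aθ − θA = εθ. -/
/-!
The failure of `D` to be a derivation, `[DX, Y] + [X, DY] - D[X, Y]`, is itself the bracket of
`𝔤(εθ + θA - Aθ)` applied to `X, Y`: the `ξ`-terms cancel. The bracket of `𝔤(M)` vanishes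
identically only when `M = 0`.
-/

open Matrix

/-- The Lie bracket of `𝔤(θ)`: `[(a,w),(b,z)] = (0, a·(θz) − b·(θw))`. -/
def gBracket (θ : Matrix (Fin 2) (Fin 2) ℝ) (X Y : ℝ × (Fin 2 → ℝ)) : ℝ × (Fin 2 → ℝ) :=
  (0, X.1 • (θ *ᵥ Y.2) - Y.1 • (θ *ᵥ X.2))

theorem gBracket_eq_zero_iff (M : Matrix (Fin 2) (Fin 2) ℝ) :
    (∀ X Y, gBracket M X Y = 0) ↔ M = 0 := by
  refine ⟨fun h => ?_, fun h X Y => by simp [gBracket, h]⟩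
  refine Matrix.toLin'.injective (LinearMap.ext fun v => ?_)
  simpa [gBracket] using h (1, 0) (0, v)

theorem gBracket_derivation_defect (θ A : Matrix (Fin 2) (Fin 2) ℝ) (ε : ℝ) (ξ : Fin 2 → ℝ)
    (D : ℝ × (Fin 2 → ℝ) → ℝ × (Fin 2 → ℝ))
    (hD : ∀ p : ℝ × (Fin 2 → ℝ), D p = (ε * p.1, p.1 • ξ + A *ᵥ p.2)) (X Y : ℝ × (Fin 2 → ℝ)) :
    gBracket θ (D X) Y + gBracket θ X (D Y) - D (gBracket θ X Y) =
      gBracket (ε • θ + θ * A - A * θ) X Y := by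
  simp only [hD, gBracket, Prod.mk_sub_mk, Prod.mk_add_mk, Prod.mk.injEq, mul_zero, zero_smul,
    zero_add, add_zero, sub_zero, true_and]
  simp only [mulVec_sub, mulVec_add, mulVec_smul, sub_mulVec, add_mulVec, smul_mulVec,
    ← mulVec_mulVec]
  module

theorem stmt0 (θ A : Matrix (Fin 2) (Fin 2) ℝ) (ε : ℝ) (ξ : Fin 2 → ℝ)
    (D : ℝ × (Fin 2 → ℝ) → ℝ × (Fin 2 → ℝ))
    (hD : ∀ p : ℝ × (Fin 2 → ℝ), D p = (ε * p.1, p.1 • ξ + A *ᵥ p.2)) :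
    (∀ X Y : ℝ × (Fin 2 → ℝ),
        D (gBracket θ X Y) = gBracket θ (D X) Y + gBracket θ X (D Y)) ↔
      A * θ - θ * A = ε • θ := by
  calc (∀ X Y, D (gBracket θ X Y) = gBracket θ (D X) Y + gBracket θ X (D Y))
      ↔ ∀ X Y, gBracket (ε • θ + θ * A - A * θ) X Y = 0 := by
        simp only [← gBracket_derivation_defect θ A ε ξ D hD, sub_eq_zero, eq_comm]
    _ ↔ ε • θ + θ * A - A * θ = 0 := gBracket_eq_zero_iff _
    _ ↔ A * θ - θ * A = ε • θ := by
        rw [sub_eq_zero, eq_comm, ← sub_eq_iff_eq_add]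
end

section
/- Let θ be a real 2×2 matrix with tr θ ≠ 0 or det θ ≠ 0. A linear map D : ℝ × ℝ² → ℝ × ℝ² of the form D(a,w) = (εa, aξ + Aw), with ε ∈ ℝ, ξ ∈ ℝ² and A a real 2×2 matrix, is a derivation of the Lie algebra 𝔤(θ) if and only if ε = 0 and Aθ = θA. -/
/-! Testing a derivation `D` on `X = (1, 0)`, `Y = (0, z)` gives `Aθ − θA = εθ`. Taking traces
gives `ε · tr θ = 0`; when `θ` is invertible, conjugating instead gives `A = ε + θAθ⁻¹`, whose
trace gives `2ε = 0`. Conversely, when `ε = 0` and `A` commutes with `θ`, the derivation identity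
is a direct computation. -/

open Matrix

section Commutator

variable {n R : Type*} [Fintype n] [CommRing R] {A θ : Matrix n n R} {ε : R}

theorem Matrix.mul_trace_eq_zero_of_mul_eq_smul_add (h : A * θ = ε • θ + θ * A) :
    ε * θ.trace = 0 := by
  have := congrArg trace h
  rwa [trace_add, trace_smul, trace_mul_comm θ A, right_eq_add, smul_eq_mul] at this

theorem Matrix.mul_card_eq_zero_of_mul_eq_smul_add [DecidableEq n] (hθ : IsUnit θ.det)
    (h : A * θ = ε • θ + θ * A) : ε * Fintype.card n = 0 := by
  have hA : A = ε • 1 + θ * A * θ⁻¹ := calc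
    A = A * θ * θ⁻¹ := (mul_nonsing_inv_cancel_right θ A hθ).symm
    _ = ε • 1 + θ * A * θ⁻¹ := by rw [h, add_mul, smul_mul_assoc, mul_nonsing_inv θ hθ]
  have := congrArg trace hA
  rwa [trace_add, trace_conj ((isUnit_iff_isUnit_det θ).mpr hθ), right_eq_add, trace_smul,
    trace_one, smul_eq_mul] at this

theorem Matrix.eq_zero_of_mul_eq_smul_add {K : Type*} [Field K] [CharZero K] [DecidableEq n]
    [Nonempty n] {A θ : Matrix n n K} {ε : K} (hθ : θ.trace ≠ 0 ∨ θ.det ≠ 0) (h : A * θ = ε • θ + θ * A) :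
    ε = 0 := by
  rcases hθ with hθ | hθ
  · exact (mul_eq_zero.mp (mul_trace_eq_zero_of_mul_eq_smul_add h)).resolve_right hθ
  · have := mul_card_eq_zero_of_mul_eq_smul_add hθ.isUnit h
    exact (mul_eq_zero.mp this).resolve_right (by simp)

end Commutator

def IsBracketDerivation (θ : Matrix (Fin 2) (Fin 2) ℝ) (D : ℝ × (Fin 2 → ℝ) → ℝ × (Fin 2 → ℝ)) :
    Prop :=
  ∀ X Y, D (gBracket θ X Y) = gBracket θ (D X) Y + gBracket θ X (D Y)

section Derivation

variable {θ A : Matrix (Fin 2) (Fin 2) ℝ} {ε : ℝ} {ξ : Fin 2 → ℝ}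
  {D : ℝ × (Fin 2 → ℝ) → ℝ × (Fin 2 → ℝ)}

theorem mul_eq_smul_add_of_isBracketDerivation
    (hD : ∀ p : ℝ × (Fin 2 → ℝ), D p = (ε * p.1, p.1 • ξ + A *ᵥ p.2))
    (h : IsBracketDerivation θ D) : A * θ = ε • θ + θ * A := by
  refine ext_iff_mulVec.mpr fun z => ?_
  have hz := congrArg Prod.snd (h (1, 0) (0, z))
  simp only [gBracket, hD] at hz
  rw [add_mulVec, smul_mulVec, ← mulVec_mulVec, ← mulVec_mulVec]
  simpa using hz

theorem isBracketDerivation_of_commute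
    (hD : ∀ p : ℝ × (Fin 2 → ℝ), D p = (ε * p.1, p.1 • ξ + A *ᵥ p.2)) (hε : ε = 0)
    (hA : A * θ = θ * A) : IsBracketDerivation θ D := by
  intro X Y
  have hcomm : ∀ v, A *ᵥ (θ *ᵥ v) = θ *ᵥ (A *ᵥ v) := fun v => by
    rw [mulVec_mulVec, mulVec_mulVec, hA]
  simp only [gBracket, hD, hε, zero_mul, zero_smul, zero_add, mulVec_sub, mulVec_smul, hcomm,
    mulVec_add, Prod.mk_add_mk, Prod.mk.injEq]
  exact ⟨trivial, by module⟩

end Derivation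

theorem stmt1 (θ A : Matrix (Fin 2) (Fin 2) ℝ) (hθ : θ.trace ≠ 0 ∨ θ.det ≠ 0)
    (ε : ℝ) (ξ : Fin 2 → ℝ)
    (D : ℝ × (Fin 2 → ℝ) → ℝ × (Fin 2 → ℝ))
    (hD : ∀ p : ℝ × (Fin 2 → ℝ), D p = (ε * p.1, p.1 • ξ + A *ᵥ p.2)) :
    (∀ X Y : ℝ × (Fin 2 → ℝ),
        D (gBracket θ X Y) = gBracket θ (D X) Y + gBracket θ X (D Y)) ↔
      ε = 0 ∧ A * θ = θ * A := by
  constructor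
  · intro h
    have hAθ := mul_eq_smul_add_of_isBracketDerivation hD h
    have hε := eq_zero_of_mul_eq_smul_add hθ hAθ
    refine ⟨hε, ?_⟩
    rwa [hε, zero_smul, zero_add] at hAθ
  · rintro ⟨hε, hA⟩
    exact isBracketDerivation_of_commute hD hε hA
end

section
/- Let θ be a real 2×2 matrix, ε ∈ ℝ with ε ≠ 0, η ∈ ℝ², and P an invertible real 2×2 matrix. The linear bijection φ : ℝ × ℝ² → ℝ × ℝ² defined by φ(a,w) = (εa, aη + Pw) is a Lie algebra automorphism of 𝔤(θ) (i.e. φ[X,Y] = [φX, φY] for all X,Y ∈ 𝔤(θ)) if and only if Pθ = ε·θP. -/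
/-!
Both sides of the automorphism condition are again brackets of the same shape:
`φ [X, Y] = [X, Y]_{Pθ}` because `[X, Y]` has zero first coordinate, and
`[φ X, φ Y]_θ = [X, Y]_{ε θ P}` because the `η`-terms cancel by antisymmetry.
The bracket determines its matrix, so the condition is `P θ = ε θ P`.
-/

open Matrix

theorem gBracket_injective : Function.Injective gBracket := by
  intro θ θ' h
  refine Matrix.ext_of_mulVec_single fun j => ?_
  simpa [gBracket] using congrArg Prod.snd (congrFun₂ h (1, 0) (0, Pi.single j 1))

theorem map_gBracket (θ P : Matrix (Fin 2) (Fin 2) ℝ) (ε : ℝ) (η : Fin 2 → ℝ)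
    (X Y : ℝ × (Fin 2 → ℝ)) :
    (ε * (gBracket θ X Y).1, (gBracket θ X Y).1 • η + P *ᵥ (gBracket θ X Y).2) =
      gBracket (P * θ) X Y := by
  simp only [gBracket, mul_zero, zero_smul, zero_add, mulVec_sub, mulVec_smul, mulVec_mulVec]

theorem gBracket_map (θ P : Matrix (Fin 2) (Fin 2) ℝ) (ε : ℝ) (η : Fin 2 → ℝ)
    (X Y : ℝ × (Fin 2 → ℝ)) :
    gBracket θ (ε * X.1, X.1 • η + P *ᵥ X.2) (ε * Y.1, Y.1 • η + P *ᵥ Y.2) =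
      gBracket (ε • (θ * P)) X Y := by
  refine Prod.ext rfl ?_
  simp only [gBracket, mulVec_add, mulVec_smul, smul_mulVec, ← mulVec_mulVec]
  module

theorem stmt2_general (θ P : Matrix (Fin 2) (Fin 2) ℝ) (ε : ℝ)
    (η : Fin 2 → ℝ)
    (φ : ℝ × (Fin 2 → ℝ) → ℝ × (Fin 2 → ℝ))
    (hφ : ∀ p : ℝ × (Fin 2 → ℝ), φ p = (ε * p.1, p.1 • η + P *ᵥ p.2)) :
    (∀ X Y : ℝ × (Fin 2 → ℝ),
        φ (gBracket θ X Y) = gBracket θ (φ X) (φ Y)) ↔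
      P * θ = ε • (θ * P) := by
  simp only [hφ, map_gBracket, gBracket_map]
  rw [← gBracket_injective.eq_iff]
  simp only [funext_iff]

theorem stmt2 (θ P : Matrix (Fin 2) (Fin 2) ℝ) (ε : ℝ) (hε : ε ≠ 0)
    (hP : IsUnit P) (η : Fin 2 → ℝ)
    (φ : ℝ × (Fin 2 → ℝ) → ℝ × (Fin 2 → ℝ))
    (hφ : ∀ p : ℝ × (Fin 2 → ℝ), φ p = (ε * p.1, p.1 • η + P *ᵥ p.2)) :
    (∀ X Y : ℝ × (Fin 2 → ℝ),
        φ (gBracket θ X Y) = gBracket θ (φ X) (φ Y)) ↔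
      P * θ = ε • (θ * P) :=
  stmt2_general θ P ε η φ hφ
end

section
/- Let θ be a real 2×2 matrix, ε ∈ ℝ with ε² = 1, P an invertible real 2×2 matrix with Pθ = ε·θP, and η ∈ ℝ². Then the map ψ : G(θ) → G(θ) defined by ψ(t,v) = (εt, Pv + ε·Λ^θ_{εt}η) is a bijective group homomorphism of G(θ), i.e. an automorphism of the group G(θ). -/
open Matrix

/-- The matrix exponential. -/
noncomputable def mexp (B : Matrix (Fin 2) (Fin 2) ℝ) : Matrix (Fin 2) (Fin 2) ℝ :=
  NormedSpace.exp B

/-- `Λ^B_t = ∫₀^t exp(sB) ds`, taken entrywise. -/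
noncomputable def Lam (B : Matrix (Fin 2) (Fin 2) ℝ) (t : ℝ) : Matrix (Fin 2) (Fin 2) ℝ :=
  Matrix.of fun i j => ∫ s in (0:ℝ)..t, mexp (s • B) i j

/-- The product of the group `G(θ)`:
`(t₁,v₁)·(t₂,v₂) = (t₁+t₂, v₁ + exp(t₁θ)v₂)`. -/
noncomputable def Gmul (θ : Matrix (Fin 2) (Fin 2) ℝ) (x y : ℝ × (Fin 2 → ℝ)) :
    ℝ × (Fin 2 → ℝ) :=
  (x.1 + y.1, x.2 + mexp (x.1 • θ) *ᵥ y.2)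

/-!
`ψ` is a homomorphism because of two identities: `Λ_{s+t} = Λ_s + exp(sθ) Λ_t`, obtained by
splitting `∫₀^{s+t}` at `s` and shifting, and `exp(εtθ) P = P exp(tθ)`, obtained by exponentiating
`P (tθ) = (εtθ) P`.
-/

section NormedExp

attribute [local instance] Matrix.linftyOpNormedRing Matrix.linftyOpNormedAlgebra

lemma continuous_mexp_smul_apply (θ : Matrix (Fin 2) (Fin 2) ℝ) (i j : Fin 2) :
    Continuous fun s : ℝ => mexp (s • θ) i j := by
  have hexp : Continuous fun s : ℝ => mexp (s • θ) :=
    NormedSpace.exp_continuous.comp (continuous_id.smul continuous_const)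
  exact (continuous_apply_apply i j).comp hexp

lemma mexp_smul_mul_of_mul_eq_smul_mul {θ P : Matrix (Fin 2) (Fin 2) ℝ} {ε : ℝ}
    (h : P * θ = ε • (θ * P)) (t : ℝ) :
    mexp ((ε * t) • θ) * P = P * mexp (t • θ) := by
  have hsemi : SemiconjBy P (t • θ) ((ε * t) • θ) := by
    rw [SemiconjBy, Matrix.mul_smul, h, smul_smul, mul_comm t ε, Matrix.smul_mul]
  exact hsemi.exp_right.eq.symm

end NormedExp

lemma mexp_add_smul (θ : Matrix (Fin 2) (Fin 2) ℝ) (s t : ℝ) :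
    mexp ((s + t) • θ) = mexp (s • θ) * mexp (t • θ) := by
  rw [add_smul]
  exact Matrix.exp_add_of_commute _ _ (((Commute.refl θ).smul_left s).smul_right t)

lemma Lam_add (θ : Matrix (Fin 2) (Fin 2) ℝ) (s t : ℝ) :
    Lam θ (s + t) = Lam θ s + mexp (s • θ) * Lam θ t := by
  ext i j
  have hint : ∀ k a b, IntervalIntegrable (fun u => mexp (u • θ) k j) MeasureTheory.volume a b :=
    fun k => (continuous_mexp_smul_apply θ k j).intervalIntegrable
  have hshift : ∫ u in s..s + t, mexp (u • θ) i j =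
      ∑ k, mexp (s • θ) i k * ∫ u in (0:ℝ)..t, mexp (u • θ) k j := by
    have hcomp := intervalIntegral.integral_comp_add_left (fun u => mexp (u • θ) i j) s
      (a := 0) (b := t)
    rw [add_zero] at hcomp
    simp_rw [← hcomp, mexp_add_smul, mul_apply, ← intervalIntegral.integral_const_mul]
    exact intervalIntegral.integral_finsetSum fun k _ => (hint k 0 t).const_mul _
  simp only [Lam, of_apply, Matrix.add_apply, mul_apply] at hshift ⊢
  rw [← intervalIntegral.integral_add_adjacent_intervals (hint i 0 s) (hint i s (s + t)), hshift]

lemma Function.Bijective.prodMk_add {α β : Type*} [AddGroup β] {f : α → α} {A : β → β}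
    (hf : f.Bijective) (hA : A.Bijective) (g : α → β) :
    (fun p : α × β => (f p.1, A p.2 + g p.1)).Bijective := by
  refine ⟨fun p q hpq => ?_, fun q => ?_⟩
  · simp only [Prod.mk.injEq] at hpq
    have h1 : p.1 = q.1 := hf.1 hpq.1
    rw [h1, add_left_inj] at hpq
    exact Prod.ext h1 (hA.1 hpq.2)
  · obtain ⟨a, ha⟩ := hf.2 q.1
    obtain ⟨b, hb⟩ := hA.2 (q.2 - g a)
    exact ⟨(a, b), Prod.ext ha (by simp [hb])⟩

theorem stmt5 (θ P : Matrix (Fin 2) (Fin 2) ℝ) (ε : ℝ) (hε : ε ^ 2 = 1)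
    (hP : IsUnit P) (hcomm : P * θ = ε • (θ * P)) (η : Fin 2 → ℝ)
    (ψ : ℝ × (Fin 2 → ℝ) → ℝ × (Fin 2 → ℝ))
    (hψ : ∀ p : ℝ × (Fin 2 → ℝ),
      ψ p = (ε * p.1, P *ᵥ p.2 + ε • (Lam θ (ε * p.1) *ᵥ η))) :
    Function.Bijective ψ ∧
      ∀ x y : ℝ × (Fin 2 → ℝ), ψ (Gmul θ x y) = Gmul θ (ψ x) (ψ y) := by
  have hε0 : ε ≠ 0 := by rintro rfl; norm_num at hε
  refine ⟨?_, fun x y => ?_⟩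
  · rw [funext hψ]
    exact (mulLeft_bijective₀ ε hε0).prodMk_add
      ⟨mulVec_injective_of_isUnit hP, mulVec_surjective_iff_isUnit.2 hP⟩
      (fun t => ε • (Lam θ (ε * t) *ᵥ η))
  · have hconj : mexp ((ε * x.1) • θ) *ᵥ (P *ᵥ y.2) = P *ᵥ (mexp (x.1 • θ) *ᵥ y.2) := by
      rw [mulVec_mulVec, mulVec_mulVec, mexp_smul_mul_of_mul_eq_smul_mul hcomm]
    simp only [hψ, Gmul, mul_add, Lam_add, Prod.mk.injEq, true_and, add_mulVec, mulVec_add,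
      mulVec_smul, smul_add, ← mulVec_mulVec, hconj]
    abel
end

section
/- Let θ and A be real 2×2 matrices with Aθ = θA, ε ∈ ℝ with ε² = 1, P an invertible real 2×2 matrix with Pθ = ε·θP, and ξ, η ∈ ℝ². Then for all t ∈ ℝ and v ∈ ℝ²: P·(P⁻¹AP·v + Λ^θ_t·P⁻¹(εξ + Aη)) = A·(Pv + ε·Λ^θ_{εt}η) + Λ^θ_{εt}ξ. (This identity expresses that the linear vector field on G(θ) determined by the pair (P⁻¹(εξ + Aη), P⁻¹AP) is mapped by the automorphism ψ(t,v) = (εt, Pv + ε·Λ^θ_{εt}η) onto the linear vector field determined by (ξ, A).) -/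
open Matrix

/-!
Conjugating `exp(sθ)` by `P` gives `exp(εsθ)` since `Pθ = εθP`; after the substitution `s ↦ εs`
this yields `P Λ^θ_t P⁻¹ = ε Λ^θ_{εt}` (using `ε⁻¹ = ε`). As `A` commutes with `θ`, it commutes
with every `Λ^θ_u`, and the identity reduces to linear algebra.
-/

section EntrywiseIntegral

variable {l m n : Type*} [Fintype m] {a b : ℝ}

theorem Matrix.mul_of_intervalIntegral {f : ℝ → Matrix m n ℝ} (M : Matrix l m ℝ)
    (hf : ∀ i j, IntervalIntegrable (fun s => f s i j) MeasureTheory.volume a b) :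
    M * of (fun i j => ∫ s in a..b, f s i j) = of fun i j => ∫ s in a..b, (M * f s) i j := by
  ext i j
  simp only [mul_apply, of_apply, ← intervalIntegral.integral_const_mul]
  exact (intervalIntegral.integral_finsetSum fun k _ => (hf k j).const_mul _).symm

theorem Matrix.of_intervalIntegral_mul {f : ℝ → Matrix l m ℝ} (M : Matrix m n ℝ)
    (hf : ∀ i j, IntervalIntegrable (fun s => f s i j) MeasureTheory.volume a b) :
    of (fun i j => ∫ s in a..b, f s i j) * M = of fun i j => ∫ s in a..b, (f s * M) i j := by
  ext i j
  simp only [mul_apply, of_apply, ← intervalIntegral.integral_mul_const]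
  exact (intervalIntegral.integral_finsetSum fun k _ => (hf i k).mul_const _).symm

end EntrywiseIntegral

open scoped Norms.Operator in
theorem continuous_mexp_smul (θ : Matrix (Fin 2) (Fin 2) ℝ) :
    Continuous fun s : ℝ => mexp (s • θ) :=
  NormedSpace.exp_continuous.comp (continuous_id.smul continuous_const)

theorem intervalIntegrable_mexp_smul_apply (θ : Matrix (Fin 2) (Fin 2) ℝ) (i j : Fin 2)
    (a b : ℝ) : IntervalIntegrable (fun s => mexp (s • θ) i j) MeasureTheory.volume a b :=
  ((continuous_mexp_smul θ).matrix_elem i j).intervalIntegrable a b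

open scoped Norms.Operator in
theorem mul_mexp_smul_of_mul_eq {P θ : Matrix (Fin 2) (Fin 2) ℝ} {ε : ℝ}
    (h : P * θ = ε • (θ * P)) (s : ℝ) : P * mexp (s • θ) = mexp ((ε * s) • θ) * P := by
  have : SemiconjBy P (s • θ) ((ε * s) • θ) := by
    rw [SemiconjBy, mul_smul_comm, h, smul_smul, mul_comm s, smul_mul_assoc]
  exact this.exp_right

theorem mul_Lam_of_mul_eq {P θ : Matrix (Fin 2) (Fin 2) ℝ} {ε : ℝ} (hε : ε ≠ 0)
    (h : P * θ = ε • (θ * P)) (t : ℝ) : P * Lam θ t = ε⁻¹ • (Lam θ (ε * t) * P) := by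
  rw [Lam, Lam, mul_of_intervalIntegral P fun i j => intervalIntegrable_mexp_smul_apply θ i j 0 t,
    of_intervalIntegral_mul P fun i j => intervalIntegrable_mexp_smul_apply θ i j 0 (ε * t)]
  ext i j
  simp only [of_apply, Matrix.smul_apply, mul_mexp_smul_of_mul_eq h,
    intervalIntegral.integral_comp_mul_left (fun s => (mexp (s • θ) * P) i j) hε, mul_zero]

theorem Commute.Lam_right {A θ : Matrix (Fin 2) (Fin 2) ℝ} (h : Commute A θ) (t : ℝ) :
    Commute A (Lam θ t) := by
  simpa [Commute, SemiconjBy] using mul_Lam_of_mul_eq one_ne_zero (by simpa using h.eq) t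

theorem stmt7 (θ A P : Matrix (Fin 2) (Fin 2) ℝ) (hcomm : A * θ = θ * A)
    (ε : ℝ) (hε : ε ^ 2 = 1) (hP : IsUnit P) (hPθ : P * θ = ε • (θ * P))
    (ξ η : Fin 2 → ℝ) (t : ℝ) (v : Fin 2 → ℝ) :
    P *ᵥ ((P⁻¹ * A * P) *ᵥ v + Lam θ t *ᵥ (P⁻¹ *ᵥ (ε • ξ + A *ᵥ η))) =
      A *ᵥ (P *ᵥ v + ε • (Lam θ (ε * t) *ᵥ η)) + Lam θ (ε * t) *ᵥ ξ := by
  have hPinv : P * P⁻¹ = 1 := mul_nonsing_inv P ((isUnit_iff_isUnit_det P).mp hP)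
  have hεε : ε * ε = 1 := by rw [← sq, hε]
  have hεinv : ε⁻¹ = ε := inv_eq_of_mul_eq_one_right hεε
  have hconj : P * Lam θ t * P⁻¹ = ε • Lam θ (ε * t) := by
    rw [mul_Lam_of_mul_eq (left_ne_zero_of_mul_eq_one hεε) hPθ, hεinv, smul_mul_assoc,
      Matrix.mul_assoc, hPinv, Matrix.mul_one]
  have hA : A * Lam θ (ε * t) = Lam θ (ε * t) * A := (Commute.Lam_right hcomm (ε * t)).eq
  rw [mulVec_add, mulVec_mulVec, mulVec_mulVec, mulVec_mulVec, ← Matrix.mul_assoc,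
    ← Matrix.mul_assoc, hPinv, Matrix.one_mul, hconj]
  simp only [mulVec_add, smul_mulVec, mulVec_smul, mulVec_mulVec, hA, smul_smul, hεε, one_smul,
    smul_mul_assoc]
  abel
end

section
/- Let θ be a real 2×2 matrix and Δ a 2-dimensional linear subspace of ℝ × ℝ² with Δ ≠ {0} × ℝ², and let l_Δ ⊆ ℝ² be the line (1-dimensional subspace) such that Δ ∩ ({0} × ℝ²) = {0} × l_Δ. Then Δ is a Lie subalgebra of 𝔤(θ) (i.e. [X,Y] ∈ Δ for all X, Y ∈ Δ) if and only if θ l_Δ ⊆ l_Δ. -/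
/-! The bracket is `[X, Y] = (0, θ (X.1 • Y.2 - Y.1 • X.2))`, and `X.1 • Y - Y.1 • X` lies in
`Δ ∩ ({0} × ℝ²) = {0} × l` for `X, Y ∈ Δ`; so `θ l ⊆ l` makes `Δ` closed under the bracket.
Conversely, since `dim Δ ≠ dim l`, some `X ∈ Δ` has `X.1 ≠ 0`, and `[X, (0, x)] = (0, X.1 • θ x)`
for `x ∈ l`. -/

open Matrix

namespace Submodule

variable {R M : Type*} [Semiring R] [AddCommMonoid M] [Module R M]
  {Δ : Submodule R (R × M)} {l : Submodule R M}

theorem zero_mk_mem_iff_of_inf_eq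
    (hΔl : Δ ⊓ (⊥ : Submodule R R).prod ⊤ = (⊥ : Submodule R R).prod l) (v : M) :
    ((0 : R), v) ∈ Δ ↔ v ∈ l := by
  simpa using SetLike.ext_iff.mp hΔl (0, v)

theorem exists_fst_ne_zero_of_finrank_ne
    (hΔl : Δ ⊓ (⊥ : Submodule R R).prod ⊤ = (⊥ : Submodule R R).prod l)
    (h : Module.finrank R Δ ≠ Module.finrank R l) : ∃ X ∈ Δ, X.1 ≠ 0 := by
  by_contra! hfst
  have hle : Δ ≤ (⊥ : Submodule R R).prod ⊤ := fun X hX => by simp [mem_prod, hfst X hX]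
  rw [inf_eq_left.mpr hle, ← map_inr] at hΔl
  exact h (hΔl ▸ (equivMapOfInjective _ LinearMap.inr_injective l).finrank_eq.symm)

end Submodule

theorem Prod.fst_smul_sub_fst_smul {R M : Type*} [CommRing R] [AddCommGroup M] [Module R M]
    (X Y : R × M) : X.1 • Y - Y.1 • X = (0, X.1 • Y.2 - Y.1 • X.2) := by
  ext <;> simp [mul_comm]

theorem gBracket_eq (θ : Matrix (Fin 2) (Fin 2) ℝ) (X Y : ℝ × (Fin 2 → ℝ)) :
    gBracket θ X Y = (0, θ *ᵥ (X.1 • Y.2 - Y.1 • X.2)) := by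
  simp [gBracket, mulVec_sub, mulVec_smul]

theorem stmt9_general (θ : Matrix (Fin 2) (Fin 2) ℝ) (Δ : Submodule ℝ (ℝ × (Fin 2 → ℝ)))
    (h2 : Module.finrank ℝ Δ = 2)
    (l : Submodule ℝ (Fin 2 → ℝ)) (hl : Module.finrank ℝ l = 1)
    (hΔl : Δ ⊓ (⊥ : Submodule ℝ ℝ).prod (⊤ : Submodule ℝ (Fin 2 → ℝ)) =
      (⊥ : Submodule ℝ ℝ).prod l) :
    (∀ X ∈ Δ, ∀ Y ∈ Δ, gBracket θ X Y ∈ Δ) ↔ ∀ x ∈ l, θ *ᵥ x ∈ l := by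
  have hmem := Submodule.zero_mk_mem_iff_of_inf_eq hΔl
  constructor
  · intro hbracket x hx
    obtain ⟨X, hXΔ, hX⟩ :=
      Submodule.exists_fst_ne_zero_of_finrank_ne hΔl (by rw [h2, hl]; norm_num)
    have := hbracket X hXΔ (0, x) ((hmem x).2 hx)
    rwa [gBracket_eq, hmem, zero_smul, sub_zero, mulVec_smul, Submodule.smul_mem_iff _ hX] at this
  · intro hθ X hX Y hY
    have hcomb : X.1 • Y - Y.1 • X ∈ Δ := Δ.sub_mem (Δ.smul_mem _ hY) (Δ.smul_mem _ hX)
    rw [Prod.fst_smul_sub_fst_smul, hmem] at hcomb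
    rw [gBracket_eq, hmem]
    exact hθ _ hcomb

theorem stmt9 (θ : Matrix (Fin 2) (Fin 2) ℝ) (Δ : Submodule ℝ (ℝ × (Fin 2 → ℝ)))
    (h2 : Module.finrank ℝ Δ = 2)
    (hne : Δ ≠ (⊥ : Submodule ℝ ℝ).prod (⊤ : Submodule ℝ (Fin 2 → ℝ)))
    (l : Submodule ℝ (Fin 2 → ℝ)) (hl : Module.finrank ℝ l = 1)
    (hΔl : Δ ⊓ (⊥ : Submodule ℝ ℝ).prod (⊤ : Submodule ℝ (Fin 2 → ℝ)) =
      (⊥ : Submodule ℝ ℝ).prod l) :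
    (∀ X ∈ Δ, ∀ Y ∈ Δ, gBracket θ X Y ∈ Δ) ↔ ∀ x ∈ l, θ *ᵥ x ∈ l :=
  stmt9_general θ Δ h2 l hl hΔl
end

section
/- Let θ and A be real 2×2 matrices with Aθ = θA and A ≠ 0, let ξ ∈ ℝ², and let n ∈ ℝ² be nonzero, with n^⊥ = {x ∈ ℝ² : ⟨x,n⟩ = 0}. Assume that at least one of the following holds: θ(n^⊥) ⊄ n^⊥, or A(n^⊥) ⊄ n^⊥, or ξ ∉ n^⊥. Then 0 is a regular value of F: for every (t,v) ∈ ℝ × ℝ² with F(t,v) = 0, the (Fréchet) derivative of F at (t,v) is a nonzero linear functional on ℝ × ℝ². -/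
/-!
Suppose `F(t, v) = 0` and `DF(t, v) = 0`, and put `x = exp(-tθ)(Av + Λ_t ξ)`, so `⟨x, n⟩ = 0`.
The `v`-derivative `h ↦ ⟨exp(-tθ) A h, n⟩` vanishes, and `exp(-tθ)` is invertible and commutes
with `A`, so the range of `A` lies in `n^⊥`. In the plane `n^⊥` is a line, hence it is spanned by
the nonzero range of `A`, which is `θ`-invariant because `θ` commutes with `A`. The `t`-derivative
is `⟨ξ - θx, n⟩`, and `θx ∈ n^⊥`, so `ξ ∈ n^⊥` as well: none of the three alternatives holds.
-/

open Matrix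

/-- `F(t,v) = ⟨exp(−tθ)(Av + Λ^θ_t ξ), n⟩`. -/
noncomputable def Fu (θ A : Matrix (Fin 2) (Fin 2) ℝ) (ξ n : Fin 2 → ℝ)
    (p : ℝ × (Fin 2 → ℝ)) : ℝ :=
  (mexp ((-p.1) • θ) *ᵥ (A *ᵥ p.2 + Lam θ p.1 *ᵥ ξ)) ⬝ᵥ n

section TwoDim

variable {K : Type*} [Field K]

theorem smul_eq_smul_of_dotProduct_eq_zero {a x n : Fin 2 → K} (hn : n ≠ 0)
    (ha : a ⬝ᵥ n = 0) (hx : x ⬝ᵥ n = 0) (i : Fin 2) : a i • x = x i • a := by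
  simp only [dotProduct, Fin.sum_univ_two] at ha hx
  have hdet_smul : (a 0 * x 1 - a 1 * x 0) • n = 0 := by
    simp only [funext_iff, Fin.forall_fin_two, Pi.smul_apply, smul_eq_mul, Pi.zero_apply]
    constructor
    · linear_combination x 1 * ha - a 1 * hx
    · linear_combination a 0 * hx - x 0 * ha
  have hdet := (smul_eq_zero.mp hdet_smul).resolve_right hn
  revert i
  simp only [Fin.forall_fin_two, funext_iff, Pi.smul_apply, smul_eq_mul]
  exact ⟨⟨by ring, by linear_combination hdet⟩, ⟨by linear_combination -hdet, by ring⟩⟩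

theorem mulVec_dotProduct_eq_zero_of_commute {θ A : Matrix (Fin 2) (Fin 2) K} {n : Fin 2 → K}
    (hcomm : A * θ = θ * A) (hA : A ≠ 0) (hAn : ∀ x, (A *ᵥ x) ⬝ᵥ n = 0) {x : Fin 2 → K}
    (hx : x ⬝ᵥ n = 0) : (θ *ᵥ x) ⬝ᵥ n = 0 := by
  rcases eq_or_ne n 0 with rfl | hn
  · exact dotProduct_zero _
  obtain ⟨u, hu⟩ : ∃ u, A *ᵥ u ≠ 0 := by
    by_contra! h
    exact hA (ext_of_mulVec_single fun j => (h _).trans (zero_mulVec _).symm)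
  obtain ⟨i, hi⟩ := Function.ne_iff.mp hu
  have hθAu : (θ *ᵥ (A *ᵥ u)) ⬝ᵥ n = 0 := by
    rw [mulVec_mulVec, ← hcomm, ← mulVec_mulVec]
    exact hAn _
  have h := congrArg (fun y => (θ *ᵥ y) ⬝ᵥ n)
    (smul_eq_smul_of_dotProduct_eq_zero hn (hAn u) hx i)
  simp only [mulVec_smul, smul_dotProduct, hθAu, smul_eq_mul, mul_zero] at h
  exact (mul_eq_zero.mp h).resolve_left hi

end TwoDim

section EntrywiseCalculus

variable {𝕜 : Type*} [NontriviallyNormedField 𝕜] {m l : Type*} [Fintype l] {t : 𝕜}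

theorem hasDerivAt_mulVec_apply {M : 𝕜 → Matrix m l 𝕜} {M' : Matrix m l 𝕜}
    {w : 𝕜 → l → 𝕜} {w' : l → 𝕜} (hM : ∀ i j, HasDerivAt (fun s => M s i j) (M' i j) t)
    (hw : ∀ j, HasDerivAt (fun s => w s j) (w' j) t) (i : m) :
    HasDerivAt (fun s => (M s *ᵥ w s) i) ((M' *ᵥ w t + M t *ᵥ w') i) t := by
  simp only [mulVec, dotProduct, Pi.add_apply, ← Finset.sum_add_distrib]
  exact HasDerivAt.fun_sum fun j _ => (hM i j).mul (hw j)

theorem hasDerivAt_dotProduct_const {x : 𝕜 → l → 𝕜} {x' : l → 𝕜}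
    (hx : ∀ i, HasDerivAt (fun s => x s i) (x' i) t) (c : l → 𝕜) :
    HasDerivAt (fun s => x s ⬝ᵥ c) (x' ⬝ᵥ c) t :=
  HasDerivAt.fun_sum fun i _ => (hx i).mul_const (c i)

end EntrywiseCalculus

section MatrixExponential

variable (θ : Matrix (Fin 2) (Fin 2) ℝ)

theorem hasDerivAt_mexp_smul_apply (t : ℝ) (i j : Fin 2) :
    HasDerivAt (fun s : ℝ => mexp (s • θ) i j) ((θ * mexp (t • θ)) i j) t := by
  -- Mathlib fixes no norm on matrices; any normed-algebra norm will do for an entrywise statement.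
  let := Matrix.linftyOpNormedRing (n := Fin 2) (α := ℝ)
  let := Matrix.linftyOpNormedAlgebra (n := Fin 2) (R := ℝ) (α := ℝ)
  exact (entryLinearMap ℝ ℝ i j).toContinuousLinearMap.hasFDerivAt.comp_hasDerivAt t
    (hasDerivAt_exp_smul_const' θ t)

theorem hasDerivAt_Lam_apply (t : ℝ) (i j : Fin 2) :
    HasDerivAt (fun s => Lam θ s i j) (mexp (t • θ) i j) t :=
  (continuous_iff_continuousAt.mpr fun s => (hasDerivAt_mexp_smul_apply θ s i j).continuousAt
    ).integral_hasStrictDerivAt 0 t |>.hasDerivAt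

theorem mexp_neg_smul_mul_mexp_smul (t : ℝ) : mexp ((-t) • θ) * mexp (t • θ) = 1 := by
  rw [mexp, mexp, ← Matrix.exp_add_of_commute _ _ ((Commute.refl θ).smul_left _ |>.smul_right _),
    ← add_smul, neg_add_cancel, zero_smul, NormedSpace.exp_zero]

theorem mexp_neg_smul_mul_mul_mexp_smul {A : Matrix (Fin 2) (Fin 2) ℝ} (hcomm : A * θ = θ * A)
    (t : ℝ) : mexp ((-t) • θ) * A * mexp (t • θ) = A := by
  have hA : A * mexp (t • θ) = mexp (t • θ) * A := ((Commute.smul_right hcomm t).exp_right).eq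
  rw [mul_assoc, hA, ← mul_assoc, mexp_neg_smul_mul_mexp_smul, one_mul]

end MatrixExponential

section Fu

variable (θ A : Matrix (Fin 2) (Fin 2) ℝ) (ξ n : Fin 2 → ℝ)

theorem differentiable_Fu : Differentiable ℝ (Fu θ A ξ n) := by
  have hE : ∀ i j, Differentiable ℝ fun p : ℝ × (Fin 2 → ℝ) => mexp ((-p.1) • θ) i j :=
    fun i j p => ((hasDerivAt_mexp_smul_apply θ _ i j).differentiableAt).comp p
      (differentiable_fst.neg p)
  have hL : ∀ i j, Differentiable ℝ fun p : ℝ × (Fin 2 → ℝ) => Lam θ p.1 i j :=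
    fun i j p => ((hasDerivAt_Lam_apply θ _ i j).differentiableAt).comp p (differentiable_fst p)
  unfold Fu
  simp only [dotProduct, mulVec, Pi.add_apply]
  fun_prop

theorem Fu_mk_add (t : ℝ) (v h : Fin 2 → ℝ) :
    Fu θ A ξ n (t, v + h) = Fu θ A ξ n (t, v) + (mexp ((-t) • θ) *ᵥ (A *ᵥ h)) ⬝ᵥ n := by
  simp only [Fu, mulVec_add, add_dotProduct]
  ring

theorem hasDerivAt_Fu_fst (t : ℝ) (v : Fin 2 → ℝ) :
    HasDerivAt (fun s => Fu θ A ξ n (s, v))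
      ((ξ - θ *ᵥ (mexp ((-t) • θ) *ᵥ (A *ᵥ v + Lam θ t *ᵥ ξ))) ⬝ᵥ n) t := by
  have hE : ∀ i j, HasDerivAt (fun s => mexp ((-s) • θ) i j) ((-(θ * mexp ((-t) • θ))) i j) t :=
    fun i j => by
      simpa only [Function.comp_def, mul_neg_one, Matrix.neg_apply] using
        (hasDerivAt_mexp_smul_apply θ (-t) i j).comp t (hasDerivAt_neg t)
  have hw : ∀ j, HasDerivAt (fun s => (A *ᵥ v + Lam θ s *ᵥ ξ) j) ((mexp (t • θ) *ᵥ ξ) j) t :=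
    fun j => by
      have h := (hasDerivAt_mulVec_apply (hasDerivAt_Lam_apply θ t) (w := fun _ => ξ) (w' := 0)
        (fun _ => hasDerivAt_const t _) j).const_add ((A *ᵥ v) j)
      rwa [mulVec_zero, add_zero] at h
  refine (hasDerivAt_dotProduct_const (hasDerivAt_mulVec_apply hE hw) n).congr_deriv ?_
  rw [mulVec_mulVec (M := mexp _), mexp_neg_smul_mul_mexp_smul, one_mulVec, neg_mulVec,
    ← mulVec_mulVec, sub_eq_neg_add]

theorem fderiv_Fu_apply (t : ℝ) (v : Fin 2 → ℝ) (τ : ℝ) (h : Fin 2 → ℝ) :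
    fderiv ℝ (Fu θ A ξ n) (t, v) (τ, h) =
      τ * ((ξ - θ *ᵥ (mexp ((-t) • θ) *ᵥ (A *ᵥ v + Lam θ t *ᵥ ξ))) ⬝ᵥ n) +
        (mexp ((-t) • θ) *ᵥ (A *ᵥ h)) ⬝ᵥ n := by
  have hF := (differentiable_Fu θ A ξ n (t, v)).hasFDerivAt
  have h_fst : fderiv ℝ (Fu θ A ξ n) (t, v) (1, 0) =
      (ξ - θ *ᵥ (mexp ((-t) • θ) *ᵥ (A *ᵥ v + Lam θ t *ᵥ ξ))) ⬝ᵥ n := by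
    have hcomp := hF.comp_hasDerivAt t ((hasDerivAt_id t).prodMk (hasDerivAt_const t v))
    exact hcomp.unique (hasDerivAt_Fu_fst θ A ξ n t v)
  have h_snd : fderiv ℝ (Fu θ A ξ n) (t, v) (0, h) = (mexp ((-t) • θ) *ᵥ (A *ᵥ h)) ⬝ᵥ n := by
    have hline : HasDerivAt (fun s : ℝ => Fu θ A ξ n (t, v + s • h))
        ((mexp ((-t) • θ) *ᵥ (A *ᵥ h)) ⬝ᵥ n) 0 := by
      simp only [Fu_mk_add, mulVec_smul, smul_dotProduct, smul_eq_mul]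
      simpa using ((hasDerivAt_id (0 : ℝ)).mul_const _).const_add (Fu θ A ξ n (t, v))
    have hcurve : HasDerivAt (fun s : ℝ => (t, v + s • h)) (0, h) 0 :=
      (hasDerivAt_const 0 t).prodMk
        (by simpa using ((hasDerivAt_id (0 : ℝ)).smul_const h).const_add v)
    have hcomp := hF.comp_hasDerivAt_of_eq 0 hcurve (by simp)
    exact hcomp.unique hline
  have hsplit : ((τ, h) : ℝ × (Fin 2 → ℝ)) = τ • (1, 0) + (0, h) := by simp
  rw [hsplit, map_add, map_smul, h_fst, h_snd, smul_eq_mul]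

end Fu

theorem stmt12_general (θ A : Matrix (Fin 2) (Fin 2) ℝ) (hcomm : A * θ = θ * A) (hA : A ≠ 0)
    (ξ n : Fin 2 → ℝ)
    (hlarc : (¬ ∀ x : Fin 2 → ℝ, x ⬝ᵥ n = 0 → (θ *ᵥ x) ⬝ᵥ n = 0) ∨
             (¬ ∀ x : Fin 2 → ℝ, x ⬝ᵥ n = 0 → (A *ᵥ x) ⬝ᵥ n = 0) ∨
             ξ ⬝ᵥ n ≠ 0) :
    ∀ p : ℝ × (Fin 2 → ℝ), Fu θ A ξ n p = 0 → fderiv ℝ (Fu θ A ξ n) p ≠ 0 := by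
  rintro ⟨t, v⟩ hF hD
  have hAn : ∀ x, (A *ᵥ x) ⬝ᵥ n = 0 := fun x => by
    have h := fderiv_Fu_apply θ A ξ n t v 0 (mexp (t • θ) *ᵥ x)
    rwa [hD, _root_.zero_apply, zero_mul, zero_add, mulVec_mulVec, mulVec_mulVec,
      mexp_neg_smul_mul_mul_mexp_smul θ hcomm, eq_comm] at h
  have hθn : ∀ x, x ⬝ᵥ n = 0 → (θ *ᵥ x) ⬝ᵥ n = 0 :=
    fun x hx => mulVec_dotProduct_eq_zero_of_commute hcomm hA hAn hx
  have hξn : ξ ⬝ᵥ n = 0 := by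
    have h := fderiv_Fu_apply θ A ξ n t v 1 0
    rwa [hD, _root_.zero_apply, sub_dotProduct, hθn _ hF, sub_zero, one_mul, mulVec_zero,
      mulVec_zero, zero_dotProduct, add_zero, eq_comm] at h
  rcases hlarc with h | h | h
  exacts [h hθn, h fun x _ => hAn x, h hξn]

theorem stmt12 (θ A : Matrix (Fin 2) (Fin 2) ℝ) (hcomm : A * θ = θ * A) (hA : A ≠ 0)
    (ξ n : Fin 2 → ℝ) (hn : n ≠ 0)
    (hlarc : (¬ ∀ x : Fin 2 → ℝ, x ⬝ᵥ n = 0 → (θ *ᵥ x) ⬝ᵥ n = 0) ∨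
             (¬ ∀ x : Fin 2 → ℝ, x ⬝ᵥ n = 0 → (A *ᵥ x) ⬝ᵥ n = 0) ∨
             ξ ⬝ᵥ n ≠ 0) :
    ∀ p : ℝ × (Fin 2 → ℝ), Fu θ A ξ n p = 0 → fderiv ℝ (Fu θ A ξ n) p ≠ 0 :=
  stmt12_general θ A hcomm hA ξ n hlarc
end

section
/- Let θ and A be real 2×2 matrices with Aθ = θA and A invertible, let ξ ∈ ℝ², and let n ∈ ℝ² be nonzero. Define H : ℝ × ℝ² → ℝ × ℝ² by H(t,v) = (t, A⁻¹(exp(tθ)v − Λ^θ_t ξ)). Then H is a homeomorphism of ℝ × ℝ² whose inverse is (t,v) ↦ (t, exp(−tθ)(Av + Λ^θ_t ξ)), and F(H(t,v)) = ⟨v, n⟩ for all (t,v) ∈ ℝ × ℝ². -/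
open Matrix

lemma mexp_neg_mul_mexp (B : Matrix (Fin 2) (Fin 2) ℝ) : mexp (-B) * mexp B = 1 := by
  rw [mexp, mexp, ← Matrix.exp_add_of_commute _ _ (Commute.neg_left (Commute.refl B)),
    neg_add_cancel, NormedSpace.exp_zero]

lemma mexp_mul_mexp_neg (B : Matrix (Fin 2) (Fin 2) ℝ) : mexp B * mexp (-B) = 1 := by
  simpa using mexp_neg_mul_mexp (-B)

@[fun_prop]
lemma continuous_mexp : Continuous mexp := by
  -- Matrices carry no global norm; any normed-algebra structure inducing the product topology will do.
  let : NormedRing (Matrix (Fin 2) (Fin 2) ℝ) := Matrix.linftyOpNormedRing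
  let : NormedAlgebra ℝ (Matrix (Fin 2) (Fin 2) ℝ) := Matrix.linftyOpNormedAlgebra
  let : NormedAlgebra ℚ (Matrix (Fin 2) (Fin 2) ℝ) := NormedAlgebra.restrictScalars ℚ ℝ _
  exact NormedSpace.exp_continuous

@[fun_prop]
lemma continuous_Lam (B : Matrix (Fin 2) (Fin 2) ℝ) : Continuous (Lam B) := by
  refine continuous_matrix fun i j => intervalIntegral.continuous_primitive (fun a b => ?_) 0
  exact (Continuous.matrix_elem (by fun_prop) i j).intervalIntegrable a b

section AffineInverse

variable (θ A : Matrix (Fin 2) (Fin 2) ℝ) (ξ : Fin 2 → ℝ) (t : ℝ) (v : Fin 2 → ℝ)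

lemma mexp_neg_smul_mulVec_affine_cancel (hA : IsUnit A) :
    mexp ((-t) • θ) *ᵥ (A *ᵥ (A⁻¹ *ᵥ (mexp (t • θ) *ᵥ v - Lam θ t *ᵥ ξ)) + Lam θ t *ᵥ ξ)
      = v := by
  rw [mulVec_mulVec, mul_nonsing_inv A ((isUnit_iff_isUnit_det A).mp hA), one_mulVec,
    sub_add_cancel, mulVec_mulVec, neg_smul, mexp_neg_mul_mexp, one_mulVec]

lemma inv_mulVec_mexp_smul_affine_cancel (hA : IsUnit A) :
    A⁻¹ *ᵥ (mexp (t • θ) *ᵥ (mexp ((-t) • θ) *ᵥ (A *ᵥ v + Lam θ t *ᵥ ξ)) - Lam θ t *ᵥ ξ)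
      = v := by
  rw [mulVec_mulVec, neg_smul, mexp_mul_mexp_neg, one_mulVec, add_sub_cancel_right,
    mulVec_mulVec, nonsing_inv_mul A ((isUnit_iff_isUnit_det A).mp hA), one_mulVec]

end AffineInverse

theorem stmt14_general (θ A : Matrix (Fin 2) (Fin 2) ℝ) (hA : IsUnit A)
    (ξ n : Fin 2 → ℝ)
    (H Hinv : ℝ × (Fin 2 → ℝ) → ℝ × (Fin 2 → ℝ))
    (hH : ∀ p : ℝ × (Fin 2 → ℝ),
      H p = (p.1, A⁻¹ *ᵥ (mexp (p.1 • θ) *ᵥ p.2 - Lam θ p.1 *ᵥ ξ)))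
    (hHinv : ∀ p : ℝ × (Fin 2 → ℝ),
      Hinv p = (p.1, mexp ((-p.1) • θ) *ᵥ (A *ᵥ p.2 + Lam θ p.1 *ᵥ ξ))) :
    Continuous H ∧ Continuous Hinv ∧
      Function.LeftInverse Hinv H ∧ Function.RightInverse Hinv H ∧
      ∀ p : ℝ × (Fin 2 → ℝ), Fu θ A ξ n (H p) = p.2 ⬝ᵥ n := by
  have hleft : Function.LeftInverse Hinv H := fun p => by
    rw [hH, hHinv, mexp_neg_smul_mulVec_affine_cancel θ A ξ p.1 p.2 hA]
  have hright : Function.RightInverse Hinv H := fun p => by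
    rw [hHinv, hH, inv_mulVec_mexp_smul_affine_cancel θ A ξ p.1 p.2 hA]
  have hFu : ∀ q, Fu θ A ξ n q = (Hinv q).2 ⬝ᵥ n := fun q => by rw [hHinv]; rfl
  refine ⟨?_, ?_, hleft, hright, fun p => by rw [hFu, hleft p]⟩
  · rw [funext hH]
    fun_prop
  · rw [funext hHinv]
    fun_prop

theorem stmt14 (θ A : Matrix (Fin 2) (Fin 2) ℝ) (hcomm : A * θ = θ * A) (hA : IsUnit A)
    (ξ n : Fin 2 → ℝ) (hn : n ≠ 0)
    (H Hinv : ℝ × (Fin 2 → ℝ) → ℝ × (Fin 2 → ℝ))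
    (hH : ∀ p : ℝ × (Fin 2 → ℝ),
      H p = (p.1, A⁻¹ *ᵥ (mexp (p.1 • θ) *ᵥ p.2 - Lam θ p.1 *ᵥ ξ)))
    (hHinv : ∀ p : ℝ × (Fin 2 → ℝ),
      Hinv p = (p.1, mexp ((-p.1) • θ) *ᵥ (A *ᵥ p.2 + Lam θ p.1 *ᵥ ξ))) :
    Continuous H ∧ Continuous Hinv ∧
      Function.LeftInverse Hinv H ∧ Function.RightInverse Hinv H ∧
      ∀ p : ℝ × (Fin 2 → ℝ), Fu θ A ξ n (H p) = p.2 ⬝ᵥ n :=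
  stmt14_general θ A hA ξ n H Hinv hH hHinv
end

section
/- Let A be a real 2×2 matrix with (tr A)² − 4·det A < 0 (i.e. A has non-real complex eigenvalues) and tr A ≠ 0, let u, v ∈ ℝ² be nonzero vectors, let τ ∈ ℝ, and define γ : ℝ → ℝ by γ(t) = ⟨exp(tA)u, v⟩ + τ. Then the set {t ∈ ℝ : γ(t) = 0} is infinite, and every point of it is isolated: for each t₀ with γ(t₀) = 0 there is δ > 0 such that γ(t) ≠ 0 whenever 0 < |t − t₀| < δ. -/
open Matrix

/-!
Write `tr A = 2a` and `det A = a² + b²` with `b > 0`. By Cayley–Hamilton `A = a + bJ` with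
`J² = -1`, so `z ↦ Re z + Im z • J` embeds `ℂ` in the matrices and carries `exp((a + ib)t)`
to `exp(tA) = e^{at} (cos(bt) + sin(bt) J)`. Hence `γ t = e^{at} (c cos(bt) + d sin(bt)) + τ`
with `c = ⟨u, v⟩`, `d = ⟨Ju, v⟩`, and `(c, d) ≠ 0` because `u` and `Ju` span `ℝ²`.
Shifting `t` by `π / b` multiplies the oscillating part by `-e^{aπ/b}`. Since `a ≠ 0` it takes
arbitrarily large values of both signs in one direction, so the intermediate value theorem gives
infinitely many zeros; and `γ` cannot vanish identically, so, being real analytic, it has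
isolated zeros.
-/

open Real Filter Topology

theorem AnalyticOnNhd.eventually_nhdsNE_ne_zero {𝕜 E : Type*} [NontriviallyNormedField 𝕜]
    [PreconnectedSpace 𝕜] [NormedAddCommGroup E] [NormedSpace 𝕜 E] {f : 𝕜 → E}
    (hf : AnalyticOnNhd 𝕜 f Set.univ) (hne : ∃ z, f z ≠ 0) (z₀ : 𝕜) :
    ∀ᶠ z in 𝓝[≠] z₀, f z ≠ 0 := by
  refine (hf z₀ trivial).eventually_eq_zero_or_eventually_ne_zero.resolve_left fun h₀ => ?_
  obtain ⟨z, hz⟩ := hne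
  exact hz <|
    hf.eqOn_zero_of_preconnected_of_eventuallyEq_zero isPreconnected_univ trivial h₀ trivial

theorem Continuous.frequently_atTop_eq_zero {f : ℝ → ℝ} (hf : Continuous f)
    (hpos : ∃ᶠ t in atTop, 0 < f t) (hneg : ∃ᶠ t in atTop, f t < 0) :
    ∃ᶠ t in atTop, f t = 0 := by
  rw [frequently_atTop] at *
  intro M
  obtain ⟨s, hs, hfs⟩ := hpos M
  obtain ⟨t, ht, hft⟩ := hneg M
  obtain ⟨z, hz, hfz⟩ :=
    intermediate_value_uIcc hf.continuousOn (Set.mem_uIcc.2 (.inr ⟨hft.le, hfs.le⟩))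
  exact ⟨z, (le_inf hs ht).trans hz.1, hfz⟩

theorem Complex.exp_liftAux {𝔸 : Type*} [NormedRing 𝔸] [NormedAlgebra ℝ 𝔸] [Algebra ℚ 𝔸]
    (J : 𝔸) (hJ : J * J = -1) (z : ℂ) :
    NormedSpace.exp (liftAux J hJ z) = liftAux J hJ (exp z) := by
  rw [exp_eq_exp_ℂ,
    NormedSpace.map_exp (liftAux J hJ)
      (liftAux J hJ).toLinearMap.continuous_of_finiteDimensional]

theorem exists_liftAux_eq_of_sq_sub_four_mul_lt_zero {𝔸 : Type*} [Ring 𝔸] [Algebra ℝ 𝔸]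
    {A : 𝔸} {s p : ℝ} (hA : A * A - s • A + p • 1 = 0) (h : s ^ 2 - 4 * p < 0) :
    ∃ J hJ, A = Complex.liftAux J hJ ⟨s / 2, √(4 * p - s ^ 2) / 2⟩ := by
  set b := √(4 * p - s ^ 2) / 2
  have hb : b ≠ 0 := by
    have := sqrt_pos.2 (by linarith : 0 < 4 * p - s ^ 2)
    positivity
  have hb2 : b ^ 2 = p - s ^ 2 / 4 := by
    rw [div_pow, sq_sqrt (by linarith)]
    ring
  have hAA : A * A = s • A - p • 1 := by
    rw [← sub_eq_zero, ← hA]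
    abel
  refine ⟨b⁻¹ • (A - (s / 2) • 1), ?_, ?_⟩
  · have hsq : (A - (s / 2) • 1) * (A - (s / 2) • 1) = -(b ^ 2 • 1) := by
      simp only [sub_mul, mul_sub, smul_mul_assoc, mul_smul_comm, mul_one, one_mul, hAA, hb2]
      module
    have hbb : b⁻¹ * b⁻¹ * b ^ 2 = 1 := by field_simp
    rw [smul_mul_smul_comm, hsq, smul_neg, smul_smul, hbb, one_smul]
  · rw [Complex.liftAux_apply, smul_smul, mul_inv_cancel₀ hb, one_smul,
      Algebra.algebraMap_eq_smul_one]
    abel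

theorem Module.End.linearIndependent_pair_of_mul_self_eq_neg_one {K V : Type*} [Field K]
    [LinearOrder K] [IsStrictOrderedRing K] [AddCommGroup V] [Module K V] {J : Module.End K V}
    (hJ : J * J = -1) {u : V} (hu : u ≠ 0) : LinearIndependent K ![u, J u] := by
  rw [LinearIndependent.pair_iff]
  intro s t hst
  have hJst : s • J u - t • u = 0 := by
    have := congrArg J hst
    rwa [map_add, map_smul, map_smul, ← Module.End.mul_apply, hJ, map_zero,
      LinearMap.neg_apply, Module.End.one_apply, smul_neg, ← sub_eq_add_neg] at this
  have hsum : (s ^ 2 + t ^ 2) • u = 0 :=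
    calc (s ^ 2 + t ^ 2) • u = s • (s • u + t • J u) - t • (s • J u - t • u) := by module
      _ = 0 := by rw [hst, hJst, smul_zero, smul_zero, sub_zero]
  have hst0 : s ^ 2 + t ^ 2 = 0 := (smul_eq_zero.mp hsum).resolve_right hu
  constructor <;> nlinarith [sq_nonneg s, sq_nonneg t]

noncomputable def expCosSin (a b c d t : ℝ) : ℝ :=
  exp (a * t) * (c * cos (b * t) + d * sin (b * t))

section expCosSin

variable {a b c d : ℝ}

theorem expCosSin_add_pi_div (hb : b ≠ 0) (t : ℝ) :
    expCosSin a b c d (t + π / b) = -(exp (a * (π / b)) * expCosSin a b c d t) := by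
  have : b * (t + π / b) = b * t + π := by field_simp
  simp only [expCosSin, this, mul_add, exp_add, cos_add_pi, sin_add_pi]
  ring

theorem expCosSin_add_nat_mul (hb : b ≠ 0) (t : ℝ) (n : ℕ) :
    expCosSin a b c d (t + n * (2 * π / b)) =
      exp (a * (n * (2 * π / b))) * expCosSin a b c d t := by
  have : b * (t + n * (2 * π / b)) = b * t + n * (2 * π) := by field_simp
  simp only [expCosSin, this, mul_add, exp_add, cos_add_nat_mul_two_pi, sin_add_nat_mul_two_pi]
  ring

theorem expCosSin_neg (t : ℝ) : expCosSin a b c d (-t) = expCosSin (-a) b c (-d) t := by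
  simp only [expCosSin, mul_neg, neg_mul, cos_neg, sin_neg]

theorem continuous_expCosSin : Continuous (expCosSin a b c d) := by
  unfold expCosSin
  fun_prop

theorem analyticAt_expCosSin (t : ℝ) : AnalyticAt ℝ (expCosSin a b c d) t := by
  unfold expCosSin
  fun_prop

theorem exists_expCosSin_pos (hb : b ≠ 0) (hcd : c ≠ 0 ∨ d ≠ 0) :
    ∃ t, 0 < expCosSin a b c d t := by
  obtain ⟨t, ht⟩ : ∃ t, expCosSin a b c d t ≠ 0 := by
    rcases hcd with hc | hd
    · exact ⟨0, by simpa [expCosSin] using hc⟩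
    · refine ⟨π / 2 / b, ?_⟩
      have : b * (π / 2 / b) = π / 2 := by field_simp
      simpa [expCosSin, this] using hd
  rcases ht.lt_or_gt with hneg | hpos
  · refine ⟨t + π / b, ?_⟩
    rw [expCosSin_add_pi_div hb]
    have := exp_pos (a * (π / b))
    nlinarith
  · exact ⟨t, hpos⟩

theorem exists_expCosSin_add_ne_zero (hb : b ≠ 0) (hcd : c ≠ 0 ∨ d ≠ 0) (τ : ℝ) :
    ∃ t, expCosSin a b c d t + τ ≠ 0 := by
  obtain ⟨t, ht⟩ := exists_expCosSin_pos (a := a) hb hcd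
  by_contra! h
  have hshift := expCosSin_add_pi_div (a := a) (c := c) (d := d) hb t
  have := exp_pos (a * (π / b))
  nlinarith [h t, h (t + π / b)]

theorem frequently_atTop_expCosSin_add_pos_and_neg (ha : 0 < a) (hb : 0 < b)
    (hcd : c ≠ 0 ∨ d ≠ 0) (τ : ℝ) :
    (∃ᶠ t in atTop, 0 < expCosSin a b c d t + τ) ∧
      ∃ᶠ t in atTop, expCosSin a b c d t + τ < 0 := by
  obtain ⟨p, hp⟩ := exists_expCosSin_pos (a := a) hb.ne' hcd
  have hq : expCosSin a b c d (p + π / b) < 0 := by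
    rw [expCosSin_add_pi_div hb.ne']
    have := exp_pos (a * (π / b))
    nlinarith
  have hT : 0 < 2 * π / b := by positivity
  have hgrowth : Tendsto (fun n : ℕ => exp (a * (n * (2 * π / b)))) atTop atTop :=
    tendsto_exp_atTop.comp ((tendsto_natCast_atTop_atTop.atTop_mul_const hT).const_mul_atTop ha)
  have hshift (r : ℝ) : Tendsto (fun n : ℕ => r + n * (2 * π / b)) atTop atTop :=
    tendsto_atTop_add_const_left _ r (tendsto_natCast_atTop_atTop.atTop_mul_const hT)
  constructor
  · refine (hshift p).frequently (Eventually.frequently ?_)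
    filter_upwards [(tendsto_atTop_add_const_right _ τ
      (hgrowth.atTop_mul_const hp)).eventually_gt_atTop 0] with n hn
    rwa [expCosSin_add_nat_mul hb.ne']
  · refine (hshift (p + π / b)).frequently (Eventually.frequently ?_)
    filter_upwards [(tendsto_atBot_add_const_right _ τ
      (hgrowth.atTop_mul_const_of_neg hq)).eventually_lt_atBot 0] with n hn
    rwa [expCosSin_add_nat_mul hb.ne']

theorem infinite_setOf_expCosSin_add_eq_zero (ha : a ≠ 0) (hb : 0 < b) (hcd : c ≠ 0 ∨ d ≠ 0)
    (τ : ℝ) : {t | expCosSin a b c d t + τ = 0}.Infinite := by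
  wlog hpos : 0 < a generalizing a d
  · have hrefl := this (a := -a) (d := -d) (neg_ne_zero.2 ha) (by simpa using hcd)
      (neg_pos.2 (ha.lt_of_le (not_lt.1 hpos)))
    rw [← Set.infinite_neg]
    convert hrefl using 1
    ext t
    simp [expCosSin_neg]
  obtain ⟨hp, hn⟩ := frequently_atTop_expCosSin_add_pos_and_neg hpos hb hcd τ
  exact frequently_cofinite_iff_infinite.1
    (((continuous_expCosSin.add continuous_const).frequently_atTop_eq_zero hp hn).filter_mono
      atTop_le_cofinite)

theorem eventually_nhdsNE_expCosSin_add_ne_zero (hb : b ≠ 0) (hcd : c ≠ 0 ∨ d ≠ 0)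
    (τ t₀ : ℝ) : ∀ᶠ t in 𝓝[≠] t₀, expCosSin a b c d t + τ ≠ 0 :=
  AnalyticOnNhd.eventually_nhdsNE_ne_zero
    (fun t _ => (analyticAt_expCosSin t).add analyticAt_const)
    (exists_expCosSin_add_ne_zero hb hcd τ) t₀

end expCosSin

theorem Matrix.mul_self_sub_trace_smul_add_det_smul_eq_zero (A : Matrix (Fin 2) (Fin 2) ℝ) :
    A * A - A.trace • A + A.det • 1 = 0 := by
  have := A.aeval_self_charpoly
  rw [charpoly_fin_two] at this
  simpa [sq, Algebra.algebraMap_eq_smul_one] using this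

theorem mexp_smul_liftAux_mulVec_dotProduct {J : Matrix (Fin 2) (Fin 2) ℝ} (hJ : J * J = -1)
    (z : ℂ) (t : ℝ) (u v : Fin 2 → ℝ) :
    mexp (t • Complex.liftAux J hJ z) *ᵥ u ⬝ᵥ v =
      expCosSin z.re z.im (u ⬝ᵥ v) (J *ᵥ u ⬝ᵥ v) t := by
  -- Any norm inducing the product topology serves to apply `Complex.exp_liftAux`.
  let _ := Matrix.linftyOpNormedRing (n := Fin 2) (α := ℝ)
  let _ := Matrix.linftyOpNormedAlgebra (n := Fin 2) (R := ℝ) (α := ℝ)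
  have hexp : mexp (Complex.liftAux J hJ (t • z)) = Complex.liftAux J hJ (Complex.exp (t • z)) :=
    Complex.exp_liftAux J hJ _
  rw [← map_smul, hexp, Complex.liftAux_apply, Algebra.algebraMap_eq_smul_one, add_mulVec,
    smul_mulVec, smul_mulVec, one_mulVec, add_dotProduct, smul_dotProduct, smul_dotProduct,
    Complex.exp_re, Complex.exp_im, expCosSin]
  simp only [Complex.smul_re, Complex.smul_im, smul_eq_mul, mul_comm t]
  ring

theorem dotProduct_ne_zero_or_mulVec_dotProduct_ne_zero {J : Matrix (Fin 2) (Fin 2) ℝ}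
    (hJ : J * J = -1) {u v : Fin 2 → ℝ} (hu : u ≠ 0) (hv : v ≠ 0) :
    u ⬝ᵥ v ≠ 0 ∨ J *ᵥ u ⬝ᵥ v ≠ 0 := by
  have hJ' : J.mulVecLin * J.mulVecLin = -1 := by
    rw [Module.End.mul_eq_comp, ← mulVecLin_mul, hJ]
    ext
    simp
  have hspan := (Module.End.linearIndependent_pair_of_mul_self_eq_neg_one hJ' hu)
    |>.span_eq_top_of_card_eq_finrank (by simp)
  by_contra! h
  have hv0 : (dotProductBilin ℝ ℝ).flip v = 0 := LinearMap.ext_on_range hspan fun i => by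
    fin_cases i
    exacts [h.1, h.2]
  exact hv (dotProduct_self_eq_zero.mp (LinearMap.congr_fun hv0 v))

theorem stmt19 (A : Matrix (Fin 2) (Fin 2) ℝ) (hA : A.trace ^ 2 - 4 * A.det < 0)
    (htr : A.trace ≠ 0)
    (u v : Fin 2 → ℝ) (hu : u ≠ 0) (hv : v ≠ 0) (τ : ℝ) (γ : ℝ → ℝ)
    (hγ : ∀ t : ℝ, γ t = (mexp (t • A) *ᵥ u) ⬝ᵥ v + τ) :
    {t : ℝ | γ t = 0}.Infinite ∧
      ∀ t₀ : ℝ, γ t₀ = 0 →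
        ∃ δ > 0, ∀ t : ℝ, t ≠ t₀ → |t - t₀| < δ → γ t ≠ 0 := by
  obtain ⟨J, hJ, hAJ⟩ := exists_liftAux_eq_of_sq_sub_four_mul_lt_zero
    A.mul_self_sub_trace_smul_add_det_smul_eq_zero hA
  have hb : 0 < √(4 * A.det - A.trace ^ 2) / 2 := by
    have := sqrt_pos.2 (by linarith : 0 < 4 * A.det - A.trace ^ 2)
    positivity
  obtain rfl : γ = fun t => expCosSin (A.trace / 2) (√(4 * A.det - A.trace ^ 2) / 2)
      (u ⬝ᵥ v) (J *ᵥ u ⬝ᵥ v) t + τ := by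
    funext t
    rw [hγ]
    nth_rw 1 [hAJ]
    rw [mexp_smul_liftAux_mulVec_dotProduct]
  have hcd := dotProduct_ne_zero_or_mulVec_dotProduct_ne_zero hJ hu hv
  refine ⟨infinite_setOf_expCosSin_add_eq_zero (div_ne_zero htr two_ne_zero) hb hcd τ,
    fun t₀ _ => ?_⟩
  obtain ⟨δ, hδ, hiso⟩ := Metric.eventually_nhds_iff.1
    (eventually_nhdsWithin_iff.1 (eventually_nhdsNE_expCosSin_add_ne_zero hb.ne' hcd τ t₀))
  exact ⟨δ, hδ, fun t ht htδ => hiso (by rwa [Real.dist_eq]) ht⟩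
end
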